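/- Let E' ⊆ E be fields of characteristic 0. Let V be a finite-dimensional E'-vector space, W a finite increasing filtration by E'-subspaces, and N : V → V an E'-linear nilpotent map respecting W. Then a finite increasing filtration W' on V by E'-subspaces is the relative monodromy filtration of N with respect to W if and only if E ⊗_{E'} W' is the relative monodromy filtration of 1 ⊗ N with respect to E ⊗_{E'} W on E ⊗_{E'} V. -/

import Mathlib

open Submodule

/-- `W` is a finite increasing filtration on `V`. -/
def IsFinIncrFiltration {E V : Type*} [Field E] [AddCommGroup V] [Module E V]
    (W : ℤ → Submodule E V) : Prop :=
  Monotone W ∧ (∃ a : ℤ, ∀ w ≤ a, W w = ⊥) ∧ (∃ b : ℤ, ∀ w : ℤ, b ≤ w → W w = ⊤)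

/-- `W'` is the relative monodromy filtration of `N` with respect to `W`:
`W'` is a finite increasing filtration, `N (W'_w) ⊆ W'_{w-2}`, and for all `w` and `m ≥ 0`
the map induced by `N^m` from `gr^{W'}_{w+m} gr^W_w` to `gr^{W'}_{w-m} gr^W_w` is an
isomorphism (expressed at the level of subspaces of `V`: the `k`-th piece of the filtration
induced by `W'` on `gr^W_w` is the image of `(W' k ⊓ W w) ⊔ W (w-1)`). -/
def IsRelMonodromy {E V : Type*} [Field E] [AddCommGroup V] [Module E V]
    (N : V →ₗ[E] V) (W W' : ℤ → Submodule E V) : Prop :=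
  IsFinIncrFiltration W' ∧
  (∀ w : ℤ, (W' w).map N ≤ W' (w - 2)) ∧
  (∀ (w : ℤ) (m : ℕ),
    -- injectivity of the induced map `N^m : gr^{W'}_{w+m} gr^W_w → gr^{W'}_{w-m} gr^W_w`
    (∀ x ∈ W' (w + (m : ℤ)) ⊓ W w,
        (N ^ m) x ∈ (W' (w - (m : ℤ) - 1) ⊓ W w) ⊔ W (w - 1) →
        x ∈ (W' (w + (m : ℤ) - 1) ⊓ W w) ⊔ W (w - 1)) ∧
    -- surjectivity of the induced map
    (∀ y ∈ W' (w - (m : ℤ)) ⊓ W w, ∃ x ∈ W' (w + (m : ℤ)) ⊓ W w,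
        y - (N ^ m) x ∈ (W' (w - (m : ℤ) - 1) ⊓ W w) ⊔ W (w - 1)))

/-!
A field extension `E / E'` is free, hence faithfully flat, so base change of `E'`-subspaces is an
order embedding; it commutes with `⊔` and images in general, and with `⊓` and preimages because
membership can be tested on the coordinates with respect to an `E'`-basis of `E`. Every clause of
`IsRelMonodromy` is an inclusion between subspaces built from `W`, `W'` and `N` by these
operations, so it holds after base change exactly when it holds before.
-/

open TensorProduct

lemma TensorProduct.equivFinsuppOfBasisLeft_baseChange {R A M N ι : Type*} [CommSemiring R]
    [Semiring A] [Algebra R A] [AddCommMonoid M] [Module R M] [AddCommMonoid N] [Module R N]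
    [DecidableEq ι] (b : Module.Basis ι R A) (f : M →ₗ[R] N) (x : A ⊗[R] M) (i : ι) :
    equivFinsuppOfBasisLeft b (f.baseChange A x) i = f (equivFinsuppOfBasisLeft b x i) := by
  induction x with
  | zero => simp
  | tmul a m => simp
  | add x y hx hy => simp [hx, hy]

namespace Submodule

section Semiring

variable {R A M N : Type*} [CommSemiring R] [Semiring A] [Algebra R A]
  [AddCommMonoid M] [Module R M] [AddCommMonoid N] [Module R N]

variable (A) in
lemma baseChange_sup (p q : Submodule R M) :
    (p ⊔ q).baseChange A = p.baseChange A ⊔ q.baseChange A := by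
  calc (p ⊔ q).baseChange A = (span R ((p : Set M) ∪ q)).baseChange A := by
        rw [span_union, span_eq, span_eq]
    _ = p.baseChange A ⊔ q.baseChange A := by
        rw [baseChange_span, Set.image_union, span_union, ← baseChange_span, ← baseChange_span,
          span_eq, span_eq]

variable (A) in
lemma baseChange_map (f : M →ₗ[R] N) (p : Submodule R M) :
    (p.map f).baseChange A = (p.baseChange A).map (f.baseChange A) := by
  calc (p.map f).baseChange A = span A (TensorProduct.mk R A N 1 '' (f '' p)) := by
        rw [← baseChange_span, ← map_span, span_eq]
    _ = span A (f.baseChange A '' (TensorProduct.mk R A M 1 '' p)) := by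
        simp [Set.image_image]
    _ = (p.baseChange A).map (f.baseChange A) := by
        rw [← map_span, ← baseChange_span, span_eq]

lemma mem_baseChange_iff_forall_equivFinsuppOfBasisLeft_mem {ι : Type*} [DecidableEq ι]
    (b : Module.Basis ι R A) {p : Submodule R M} {x : A ⊗[R] M} :
    x ∈ p.baseChange A ↔ ∀ i, equivFinsuppOfBasisLeft b x i ∈ p := by
  constructor
  · rintro ⟨y, rfl⟩ i
    rw [equivFinsuppOfBasisLeft_baseChange]
    exact (equivFinsuppOfBasisLeft b y i).2
  · intro h
    rw [← (equivFinsuppOfBasisLeft b).symm_apply_apply x, equivFinsuppOfBasisLeft_symm_apply]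
    exact sum_mem fun i _ => tmul_mem_baseChange_of_mem _ (h i)

variable [Module.Free R A]

variable (A) in
lemma baseChange_inf (p q : Submodule R M) :
    (p ⊓ q).baseChange A = p.baseChange A ⊓ q.baseChange A := by
  classical
  let b := Module.Free.chooseBasis R A
  refine le_antisymm (le_inf (baseChange_mono A inf_le_left) (baseChange_mono A inf_le_right))
    fun x hx => ?_
  simp only [mem_inf, mem_baseChange_iff_forall_equivFinsuppOfBasisLeft_mem b] at hx ⊢
  exact fun i => ⟨hx.1 i, hx.2 i⟩

variable (A) in
lemma baseChange_comap (f : M →ₗ[R] N) (q : Submodule R N) :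
    (q.comap f).baseChange A = (q.baseChange A).comap (f.baseChange A) := by
  classical
  let b := Module.Free.chooseBasis R A
  ext x
  simp only [mem_comap, mem_baseChange_iff_forall_equivFinsuppOfBasisLeft_mem b,
    equivFinsuppOfBasisLeft_baseChange]

end Semiring

section FaithfullyFlat

variable {R A M : Type*} [CommRing R] [Ring A] [Algebra R A] [Module.FaithfullyFlat R A]
  [AddCommGroup M] [Module R M] {p : Submodule R M}

@[simp]
lemma baseChange_eq_bot_iff : p.baseChange A = ⊥ ↔ p = ⊥ := by
  rw [← baseChange_bot A, baseChange_inj]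

@[simp]
lemma baseChange_eq_top_iff : p.baseChange A = ⊤ ↔ p = ⊤ := by
  rw [← baseChange_top A, baseChange_inj]

end FaithfullyFlat

lemma inf_comap_le_iff {R M N : Type*} [Semiring R] [AddCommMonoid M] [Module R M]
    [AddCommMonoid N] [Module R N] (f : M →ₗ[R] N) (p r : Submodule R M) (q : Submodule R N) :
    p ⊓ q.comap f ≤ r ↔ ∀ x ∈ p, f x ∈ q → x ∈ r :=
  ⟨fun h _ hp hq => h ⟨hp, hq⟩, fun h _ hx => h _ hx.1 hx.2⟩

lemma le_map_sup_iff {R M N : Type*} [Ring R] [AddCommGroup M] [Module R M]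
    [AddCommGroup N] [Module R N] (f : M →ₗ[R] N) (p : Submodule R M) (q r : Submodule R N) :
    q ≤ p.map f ⊔ r ↔ ∀ y ∈ q, ∃ x ∈ p, y - f x ∈ r := by
  refine ⟨fun h y hy => ?_, fun h y hy => ?_⟩
  · obtain ⟨_, ⟨x, hx, rfl⟩, z, hz, rfl⟩ := mem_sup.mp (h hy)
    exact ⟨x, hx, by simpa using hz⟩
  · obtain ⟨x, hx, hyx⟩ := h y hy
    rw [← add_sub_cancel (f x) y]
    exact add_mem_sup (mem_map_of_mem hx) hyx

end Submodule

lemma IsFinIncrFiltration.baseChange_iff {K L V : Type*} [Field K] [Field L] [Algebra K L]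
    [AddCommGroup V] [Module K V] {W : ℤ → Submodule K V} :
    IsFinIncrFiltration (fun w => (W w).baseChange L) ↔ IsFinIncrFiltration W := by
  simp only [IsFinIncrFiltration, Monotone, baseChange_le_iff, baseChange_eq_bot_iff,
    baseChange_eq_top_iff]

lemma isRelMonodromy_iff_le {K V : Type*} [Field K] [AddCommGroup V] [Module K V]
    (N : V →ₗ[K] V) (W W' : ℤ → Submodule K V) :
    IsRelMonodromy N W W' ↔
      IsFinIncrFiltration W' ∧ (∀ w : ℤ, (W' w).map N ≤ W' (w - 2)) ∧
      ∀ (w : ℤ) (m : ℕ),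
        W' (w + m) ⊓ W w ⊓ ((W' (w - m - 1) ⊓ W w) ⊔ W (w - 1)).comap (N ^ m) ≤
            (W' (w + m - 1) ⊓ W w) ⊔ W (w - 1) ∧
          W' (w - m) ⊓ W w ≤
            (W' (w + m) ⊓ W w).map (N ^ m) ⊔ ((W' (w - m - 1) ⊓ W w) ⊔ W (w - 1)) := by
  simp only [IsRelMonodromy, inf_comap_le_iff, le_map_sup_iff]

open scoped TensorProduct in
theorem isRelMonodromy_baseChange_iff_general
    {E' E V : Type*} [Field E'] [Field E] [Algebra E' E]
    [AddCommGroup V] [Module E' V]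
    (W W' : ℤ → Submodule E' V) (N : V →ₗ[E'] V) :
    IsRelMonodromy N W W' ↔
      IsRelMonodromy (N.baseChange E)
        (fun w : ℤ => (W w).baseChange E) (fun w : ℤ => (W' w).baseChange E) := by
  rw [isRelMonodromy_iff_le, isRelMonodromy_iff_le, IsFinIncrFiltration.baseChange_iff]
  simp only [← baseChange_inf, ← baseChange_sup, ← baseChange_map, ← baseChange_comap,
    ← LinearMap.baseChange_pow, baseChange_le_iff]

open scoped TensorProduct in
/-- Compatibility of the relative monodromy filtration with extension of scalars
`E'/E`: a filtration `W'` on `V` is the relative monodromy filtration of `N` with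
respect to `W` if and only if its base change to `E` is the relative monodromy
filtration of `1 ⊗ N` with respect to the base change of `W`. -/
theorem isRelMonodromy_baseChange_iff
    {E' E V : Type*} [Field E'] [CharZero E'] [Field E] [Algebra E' E]
    [AddCommGroup V] [Module E' V] [FiniteDimensional E' V]
    (W W' : ℤ → Submodule E' V) (N : V →ₗ[E'] V)
    (hW : IsFinIncrFiltration W) (hW' : IsFinIncrFiltration W')
    (hN : IsNilpotent N) (hNW : ∀ w : ℤ, (W w).map N ≤ W w) :
    IsRelMonodromy N W W' ↔
      IsRelMonodromy (N.baseChange E)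
        (fun w : ℤ => (W w).baseChange E) (fun w : ℤ => (W' w).baseChange E) :=
  isRelMonodromy_baseChange_iff_general W W' N
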